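/- arXiv:2312.17361 — 5 statements merged into one kernel-verified Lean document; each statement's English description precedes it below -/
import Mathlib

section
/- With the notation of the Quaternionic Laplacian construction, the matrix H^{ϙ} = A¹_s ⊙ (H⁰ + i H¹) + j (A²_s ⊙ H²) + k (A³_s ⊙ H³) is a Hermitian quaternion matrix, where A¹_s = (A + A^T)/2, A²_s = (U(A) + L(A^T))/2, A³_s = (L(A) + U(A^T))/2. -/
open Matrix Quaternion BigOperators

noncomputable section

namespace QL

variable {n : ℕ}

/-- entrywise topology matrix T = sgn(|A|) -/
def Tm (A : Matrix (Fin n) (Fin n) ℝ) : Matrix (Fin n) (Fin n) ℝ := fun u v => Real.sign |A u v|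
/-- N = sgn(|A - Aᵀ|) -/
def Nm (A : Matrix (Fin n) (Fin n) ℝ) : Matrix (Fin n) (Fin n) ℝ := fun u v => Real.sign |A u v - A v u|
/-- O = T ⊙ Tᵀ -/
def Om (A : Matrix (Fin n) (Fin n) ℝ) : Matrix (Fin n) (Fin n) ℝ := fun u v => Tm A u v * Tm A v u
/-- R = sgn(|A| - |Aᵀ|) -/
def Rm (A : Matrix (Fin n) (Fin n) ℝ) : Matrix (Fin n) (Fin n) ℝ := fun u v => Real.sign (|A u v| - |A v u|)
/-- strict upper-triangular part -/
def Um (M : Matrix (Fin n) (Fin n) ℝ) : Matrix (Fin n) (Fin n) ℝ := fun u v => if u < v then M u v else 0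
/-- strict lower-triangular part -/
def Lm (M : Matrix (Fin n) (Fin n) ℝ) : Matrix (Fin n) (Fin n) ℝ := fun u v => if v < u then M u v else 0

def H0 (A : Matrix (Fin n) (Fin n) ℝ) : Matrix (Fin n) (Fin n) ℝ := fun u v => 1 - Nm A u v
def H1 (A : Matrix (Fin n) (Fin n) ℝ) : Matrix (Fin n) (Fin n) ℝ := fun u v => Rm A u v * (1 - Om A u v)
def H2 (A : Matrix (Fin n) (Fin n) ℝ) : Matrix (Fin n) (Fin n) ℝ :=
  fun u v => Om A u v * Nm A u v * (Um (Tm A) u v - Lm (Tm A)ᵀ u v)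
def H3 (A : Matrix (Fin n) (Fin n) ℝ) : Matrix (Fin n) (Fin n) ℝ := fun u v => - H2 A u v

def A1s (A : Matrix (Fin n) (Fin n) ℝ) : Matrix (Fin n) (Fin n) ℝ := fun u v => (A u v + A v u) / 2
def A2s (A : Matrix (Fin n) (Fin n) ℝ) : Matrix (Fin n) (Fin n) ℝ := fun u v => (Um A u v + Lm Aᵀ u v) / 2
def A3s (A : Matrix (Fin n) (Fin n) ℝ) : Matrix (Fin n) (Fin n) ℝ := fun u v => (Lm A u v + Um Aᵀ u v) / 2

/-- the quaternionic matrix H^ϙ -/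
def Hq (A : Matrix (Fin n) (Fin n) ℝ) : Matrix (Fin n) (Fin n) ℍ[ℝ] :=
  fun u v => ⟨A1s A u v * H0 A u v, A1s A u v * H1 A u v, A2s A u v * H2 A u v, A3s A u v * H3 A u v⟩

/-- D̄ₛ = Diag(|A¹ₛ| e) as a quaternion matrix -/
def Dbar (A : Matrix (Fin n) (Fin n) ℝ) : Matrix (Fin n) (Fin n) ℍ[ℝ] :=
  fun u v => ((if u = v then ∑ w, |A1s A u w| else 0 : ℝ) : ℍ[ℝ])

/-- the Quaternionic Laplacian L^ϙ -/
def Lq (A : Matrix (Fin n) (Fin n) ℝ) : Matrix (Fin n) (Fin n) ℍ[ℝ] := Dbar A - Hq A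

/-- quadratic form x* Q x -/
def quadForm (Q : Matrix (Fin n) (Fin n) ℍ[ℝ]) (x : Fin n → ℍ[ℝ]) : ℍ[ℝ] :=
  ∑ u, ∑ v, star (x u) * Q u v * x v

end QL

/-!
A quaternion matrix `a + i b + j c + k d` with real `a, b, c, d` is Hermitian when `a` is
symmetric and `b, c, d` are antisymmetric. Each `Aᵏₛ` is the symmetrization of a matrix
(`A`, `U(A)`, `L(A)`), `H⁰` is symmetric and `H¹, H², H³` are antisymmetric (the sign of
`|A| - |Aᵀ|` changes under transposition, and `U(T) - L(Tᵀ) = U(T) - U(T)ᵀ`), and a Hadamard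
product of a symmetric with an antisymmetric matrix is antisymmetric.
-/

namespace Matrix

variable {ι R : Type*}

theorem IsSymm.hadamard [CommMagma R] {A B : Matrix ι ι R} (hA : A.IsSymm) (hB : B.IsSymm) :
    (A ⊙ B).IsSymm := by
  rw [IsSymm, transpose_hadamard, hA.eq, hB.eq]

theorem IsSymm.transpose_hadamard_eq_neg [Mul R] [HasDistribNeg R] {A B : Matrix ι ι R}
    (hA : A.IsSymm) (hB : Bᵀ = -B) : (A ⊙ B)ᵀ = -(A ⊙ B) := by
  rw [transpose_hadamard, hA.eq, hB]
  ext i j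
  simp

theorem transpose_sub_transpose_self [AddGroup R] (A : Matrix ι ι R) :
    (A - Aᵀ)ᵀ = -(A - Aᵀ) := by
  rw [transpose_sub, transpose_transpose, neg_sub]

def quaternionMatrix [CommRing R] (a b c d : Matrix ι ι R) : Matrix ι ι ℍ[R] :=
  of fun i j => ⟨a i j, b i j, c i j, d i j⟩

theorem isHermitian_quaternionMatrix [CommRing R] {a b c d : Matrix ι ι R} (ha : a.IsSymm)
    (hb : bᵀ = -b) (hc : cᵀ = -c) (hd : dᵀ = -d) : (quaternionMatrix a b c d).IsHermitian :=
  IsHermitian.ext fun i j => by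
    have hb := congrFun₂ hb i j
    have hc := congrFun₂ hc i j
    have hd := congrFun₂ hd i j
    simp only [transpose_apply, neg_apply] at hb hc hd
    change star (⟨a j i, b j i, c j i, d j i⟩ : ℍ[R]) = ⟨a i j, b i j, c i j, d i j⟩
    ext
    · simp [ha.apply]
    · simp [hb]
    · simp [hc]
    · simp [hd]

end Matrix

namespace QL

variable {n : ℕ}

theorem transpose_Um (M : Matrix (Fin n) (Fin n) ℝ) : (Um M)ᵀ = Lm Mᵀ := rfl

theorem transpose_Lm (M : Matrix (Fin n) (Fin n) ℝ) : (Lm M)ᵀ = Um Mᵀ := rfl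

theorem Nm_isSymm (A : Matrix (Fin n) (Fin n) ℝ) : (Nm A).IsSymm :=
  IsSymm.ext fun u v => by simp [Nm, abs_sub_comm]

theorem Om_isSymm (A : Matrix (Fin n) (Fin n) ℝ) : (Om A).IsSymm :=
  IsSymm.ext fun _ _ => mul_comm _ _

theorem Rm_swap (A : Matrix (Fin n) (Fin n) ℝ) (u v : Fin n) : Rm A v u = -Rm A u v := by
  rw [Rm, Rm, ← Real.sign_neg, neg_sub]

theorem A1s_isSymm (A : Matrix (Fin n) (Fin n) ℝ) : (A1s A).IsSymm := by
  have hA : A1s A = (2⁻¹ : ℝ) • (A + Aᵀ) := by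
    ext u v
    simp [A1s, div_eq_inv_mul]
  exact hA ▸ (isSymm_add_transpose_self A).smul _

theorem A2s_isSymm (A : Matrix (Fin n) (Fin n) ℝ) : (A2s A).IsSymm := by
  have hA : A2s A = (2⁻¹ : ℝ) • (Um A + (Um A)ᵀ) := by
    rw [transpose_Um]
    ext u v
    simp [A2s, div_eq_inv_mul]
  exact hA ▸ (isSymm_add_transpose_self _).smul _

theorem A3s_isSymm (A : Matrix (Fin n) (Fin n) ℝ) : (A3s A).IsSymm := by
  have hA : A3s A = (2⁻¹ : ℝ) • (Lm A + (Lm A)ᵀ) := by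
    rw [transpose_Lm]
    ext u v
    simp [A3s, div_eq_inv_mul]
  exact hA ▸ (isSymm_add_transpose_self _).smul _

theorem H0_isSymm (A : Matrix (Fin n) (Fin n) ℝ) : (H0 A).IsSymm :=
  IsSymm.ext fun u v => by simp [H0, (Nm_isSymm A).apply]

theorem transpose_H1 (A : Matrix (Fin n) (Fin n) ℝ) : (H1 A)ᵀ = -H1 A := by
  ext u v
  change Rm A v u * (1 - Om A v u) = -(Rm A u v * (1 - Om A u v))
  rw [Rm_swap, (Om_isSymm A).apply, neg_mul]

theorem transpose_H2 (A : Matrix (Fin n) (Fin n) ℝ) : (H2 A)ᵀ = -H2 A :=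
  ((Om_isSymm A).hadamard (Nm_isSymm A)).transpose_hadamard_eq_neg
    (transpose_sub_transpose_self (Um (Tm A)))

theorem transpose_H3 (A : Matrix (Fin n) (Fin n) ℝ) : (H3 A)ᵀ = -H3 A := by
  change (-H2 A)ᵀ = -(-H2 A)
  rw [transpose_neg, transpose_H2]

theorem Hq_eq_quaternionMatrix (A : Matrix (Fin n) (Fin n) ℝ) :
    Hq A = quaternionMatrix (A1s A ⊙ H0 A) (A1s A ⊙ H1 A) (A2s A ⊙ H2 A) (A3s A ⊙ H3 A) :=
  rfl

end QL

theorem stmt_5 {n : ℕ} (A : Matrix (Fin n) (Fin n) ℝ) :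
    (QL.Hq A)ᴴ = QL.Hq A := by
  rw [QL.Hq_eq_quaternionMatrix]
  exact isHermitian_quaternionMatrix ((QL.A1s_isSymm A).hadamard (QL.H0_isSymm A))
    ((QL.A1s_isSymm A).transpose_hadamard_eq_neg (QL.transpose_H1 A))
    ((QL.A2s_isSymm A).transpose_hadamard_eq_neg (QL.transpose_H2 A))
    ((QL.A3s_isSymm A).transpose_hadamard_eq_neg (QL.transpose_H3 A))
end
end

section
/- If A ∈ ℝ^{n×n} is symmetric with nonnegative entries, then the Quaternionic Laplacian L^{ϙ} equals the classical graph Laplacian L = D − A, where D = Diag(A e). -/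
open Matrix Quaternion BigOperators

noncomputable section

namespace QL

variable {n : ℕ} {A : Matrix (Fin n) (Fin n) ℝ}

theorem Nm_apply_eq_zero_of_isSymm (hA : A.IsSymm) (u v : Fin n) : Nm A u v = 0 := by
  simp [Nm, hA.apply u v]

theorem Rm_apply_eq_zero_of_isSymm (hA : A.IsSymm) (u v : Fin n) : Rm A u v = 0 := by
  simp [Rm, hA.apply u v]

theorem A1s_apply_of_isSymm (hA : A.IsSymm) (u v : Fin n) : A1s A u v = A u v := by
  simp [A1s, hA.apply u v]

theorem H0_apply_eq_one_of_isSymm (hA : A.IsSymm) (u v : Fin n) : H0 A u v = 1 := by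
  simp [H0, Nm_apply_eq_zero_of_isSymm hA]

theorem H1_apply_eq_zero_of_isSymm (hA : A.IsSymm) (u v : Fin n) : H1 A u v = 0 := by
  simp [H1, Rm_apply_eq_zero_of_isSymm hA]

theorem H2_apply_eq_zero_of_isSymm (hA : A.IsSymm) (u v : Fin n) : H2 A u v = 0 := by
  simp [H2, Nm_apply_eq_zero_of_isSymm hA]

theorem H3_apply_eq_zero_of_isSymm (hA : A.IsSymm) (u v : Fin n) : H3 A u v = 0 := by
  simp [H3, H2_apply_eq_zero_of_isSymm hA]

theorem Hq_apply_of_isSymm (hA : A.IsSymm) (u v : Fin n) : Hq A u v = (A u v : ℍ[ℝ]) := by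
  ext <;> simp [Hq, A1s_apply_of_isSymm hA, H0_apply_eq_one_of_isSymm hA,
    H1_apply_eq_zero_of_isSymm hA, H2_apply_eq_zero_of_isSymm hA, H3_apply_eq_zero_of_isSymm hA]

theorem Dbar_apply_of_isSymm (hA : A.IsSymm) (u v : Fin n) :
    Dbar A u v = ((if u = v then ∑ w, |A u w| else 0 : ℝ) : ℍ[ℝ]) := by
  simp only [Dbar, A1s_apply_of_isSymm hA]

theorem Lq_eq_of_isSymm (hA : A.IsSymm) :
    Lq A = fun u v => (((if u = v then ∑ w, |A u w| else 0) - A u v : ℝ) : ℍ[ℝ]) := by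
  ext1 u v
  rw [Lq, Matrix.sub_apply, Dbar_apply_of_isSymm hA, Hq_apply_of_isSymm hA, Quaternion.coe_sub]

end QL

theorem stmt_7 {n : ℕ} (A : Matrix (Fin n) (Fin n) ℝ)
    (hsymm : Aᵀ = A) (hnonneg : ∀ u v, 0 ≤ A u v) :
    QL.Lq A = fun u v => (((if u = v then ∑ w, A u w else 0) - A u v : ℝ) : ℍ[ℝ]) := by
  ext1 u v
  simp_rw [QL.Lq_eq_of_isSymm hsymm, abs_of_nonneg (hnonneg _ _)]
end
end

section
/- Suppose A ∈ ℝ^{n×n} satisfies, for all u, v: either A_{uv} = 0 or A_{uv} = A_{vu}. Then the Quaternionic Laplacian L^{ϙ} coincides with the Sign-Magnetic Laplacian L^σ, viewed as a quaternion matrix with zero j and k parts; explicitly, Re(L^{ϙ}) = Re(L^σ) and Im₁(L^{ϙ}) = Im(L^σ). -/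
open Matrix Quaternion BigOperators

noncomputable section

/-! Entrywise, the hypothesis leaves two cases. If `A u v = 0` then `T u v = 0`, so `O u v = 0`:
the `j`, `k` parts `H2`, `H3` vanish and `H1 = R`. If `A u v = A v u` then `N u v = R u v = 0`,
which kills `H1` and `H2` as well. Either way `H^ϙ u v` is the sign-magnetic entry
`A_s (1 - N) + i A_s R`. -/

namespace QL

variable {n : ℕ}

section Laplacian

variable (A : Matrix (Fin n) (Fin n) ℝ) (u v : Fin n)

theorem Lq_re : (Lq A u v).re = (if u = v then ∑ w, |A1s A u w| else 0) - A1s A u v * H0 A u v :=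
  rfl

theorem Lq_imI : (Lq A u v).imI = -(A1s A u v * H1 A u v) :=
  zero_sub _

theorem Lq_imJ : (Lq A u v).imJ = -(A2s A u v * H2 A u v) :=
  zero_sub _

theorem Lq_imK : (Lq A u v).imK = -(A3s A u v * H3 A u v) :=
  zero_sub _

end Laplacian

variable {A : Matrix (Fin n) (Fin n) ℝ} {u v : Fin n}

theorem Om_eq_zero_of_apply_eq_zero (h : A u v = 0) : Om A u v = 0 := by
  simp [Om, Tm, h]

theorem Nm_eq_zero_of_apply_eq (h : A u v = A v u) : Nm A u v = 0 := by
  simp [Nm, h]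

theorem Rm_eq_zero_of_apply_eq (h : A u v = A v u) : Rm A u v = 0 := by
  simp [Rm, h]

theorem H1_eq_Rm (h : A u v = 0 ∨ A u v = A v u) : H1 A u v = Rm A u v := by
  rcases h with h | h
  · simp [H1, Om_eq_zero_of_apply_eq_zero h]
  · simp [H1, Rm_eq_zero_of_apply_eq h]

theorem H2_eq_zero (h : A u v = 0 ∨ A u v = A v u) : H2 A u v = 0 := by
  rcases h with h | h
  · simp [H2, Om_eq_zero_of_apply_eq_zero h]
  · simp [H2, Nm_eq_zero_of_apply_eq h]

end QL

theorem stmt_9 {n : ℕ} (A : Matrix (Fin n) (Fin n) ℝ)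
    (h : ∀ u v, A u v = 0 ∨ A u v = A v u) :
    ∀ u v,
      (QL.Lq A u v).re =
        (if u = v then ∑ w, |QL.A1s A u w| else 0) - QL.A1s A u v * (1 - QL.Nm A u v) ∧
      (QL.Lq A u v).imI = -(QL.A1s A u v * QL.Rm A u v) ∧
      (QL.Lq A u v).imJ = 0 ∧ (QL.Lq A u v).imK = 0 := by
  intro u v
  rw [QL.Lq_re, QL.Lq_imI, QL.Lq_imJ, QL.Lq_imK, QL.H0, QL.H3, QL.H1_eq_Rm (h u v),
    QL.H2_eq_zero (h u v)]
  simp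
end
end

section
/- For every edge (u,v) with A_{uv} ≠ 0 and A_{vu} = 0, the entry of H^{ϙ} satisfies H^{ϙ}_{uv} = i·(A_{uv}/2) and H^{ϙ}_{vu} = −i·(A_{uv}/2); i.e., a directed edge not contained in a digon is encoded purely in the first imaginary component. -/
open Matrix Quaternion BigOperators

noncomputable section

namespace QL

variable {n : ℕ}

variable {A : Matrix (Fin n) (Fin n) ℝ} {u v : Fin n}

lemma Tm_apply_eq_zero (h : A u v = 0) : Tm A u v = 0 := by
  simp [Tm, h]

lemma Om_comm : Om A u v = Om A v u :=
  mul_comm _ _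

lemma Om_apply_eq_zero (h : A v u = 0) : Om A u v = 0 := by
  rw [Om, Tm_apply_eq_zero h, mul_zero]

lemma Nm_comm : Nm A u v = Nm A v u := by
  rw [Nm, Nm, abs_sub_comm]

lemma Nm_apply_eq_one (h : A u v ≠ A v u) : Nm A u v = 1 :=
  Real.sign_of_pos (abs_pos.mpr (sub_ne_zero.mpr h))

lemma Rm_comm : Rm A v u = -Rm A u v := by
  rw [Rm, Rm, ← Real.sign_neg, neg_sub]

lemma Rm_apply_eq_one (h : |A v u| < |A u v|) : Rm A u v = 1 :=
  Real.sign_of_pos (sub_pos.mpr h)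

lemma A1s_comm : A1s A u v = A1s A v u := by
  rw [A1s, A1s, add_comm]

lemma H2_apply_eq_zero (h : Om A u v = 0) : H2 A u v = 0 := by
  rw [H2, h, zero_mul, zero_mul]

/-- `Om A u v = 0` says that `u, v` do not form a digon, `Nm A u v = 1` that `A u v ≠ A v u`;
then `H0` and `H2 = -H3` vanish at `(u, v)` and only the `i`-component survives. -/
lemma Hq_apply_of_Om_eq_zero (hO : Om A u v = 0) (hN : Nm A u v = 1) :
    Hq A u v = ⟨0, A1s A u v * Rm A u v, 0, 0⟩ := by
  ext <;> simp [Hq, H0, H1, H3, H2_apply_eq_zero hO, hO, hN]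

end QL

theorem stmt_10 {n : ℕ} (A : Matrix (Fin n) (Fin n) ℝ) (u v : Fin n)
    (h1 : A u v ≠ 0) (h2 : A v u = 0) :
    QL.Hq A u v = (⟨0, A u v / 2, 0, 0⟩ : ℍ[ℝ]) ∧
    QL.Hq A v u = (⟨0, -(A u v / 2), 0, 0⟩ : ℍ[ℝ]) := by
  have hO : QL.Om A u v = 0 := QL.Om_apply_eq_zero h2
  have hN : QL.Nm A u v = 1 := QL.Nm_apply_eq_one (by rwa [h2])
  have hR : QL.Rm A u v = 1 := QL.Rm_apply_eq_one (by simpa [h2] using h1)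
  have hA : QL.A1s A u v = A u v / 2 := by rw [QL.A1s, h2, add_zero]
  constructor
  · rw [QL.Hq_apply_of_Om_eq_zero hO hN, hA, hR, mul_one]
  · rw [QL.Hq_apply_of_Om_eq_zero (QL.Om_comm ▸ hO) (QL.Nm_comm ▸ hN),
      ← QL.A1s_comm, QL.Rm_comm, hA, hR, mul_neg_one]
end
end

section
/- Suppose the real matrix A has no symmetric digons (i.e., A_{uv} = A_{vu} ≠ 0 never holds for u ≠ v). Let H^m = A²_s ⊙ H²₁ + A³_s ⊙ H³₁ regarded as the quaternion matrix j(A²_s ⊙ H²₁) + k(A³_s ⊙ H³₁), where H²₁ = N ⊙ (U(T) − L(T^T)) and H³₁ = −H²₁. Then H⁰ ⊙ A¹_s = 0 off the diagonal and H^{ϙ} = H^σ ⊙ (ee^T − O) + O ⊙ H^m, i.e., off digons H^{ϙ} agrees with the Sign-Magnetic matrix H^σ and on digons it agrees with H^m. -/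
open Matrix Quaternion BigOperators

noncomputable section

namespace QL

variable {n : ℕ} (A : Matrix (Fin n) (Fin n) ℝ)

/-- Off the diagonal, either `A u v ≠ A v u`, so `N = 1` kills `H⁰`, or `A u v = A v u`, which
without symmetric digons forces `A u v = A v u = 0`, so `A¹ₛ` vanishes. -/
theorem A1s_mul_H0_of_ne (hnosym : ∀ u v, u ≠ v → ¬(A u v = A v u ∧ A u v ≠ 0))
    {u v : Fin n} (huv : u ≠ v) : A1s A u v * H0 A u v = 0 := by
  by_cases hsym : A u v = A v u
  · have hzero : A u v = 0 := not_not.mp fun hne => hnosym u v huv ⟨hsym, hne⟩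
    simp [A1s, ← hsym, hzero]
  · have hpos : 0 < |A u v - A v u| := abs_pos.mpr (sub_ne_zero.mpr hsym)
    simp [H0, Nm, Real.sign_of_pos hpos]

theorem A1s_mul_H0 (hdiag : ∀ u, A u u = 0)
    (hnosym : ∀ u v, u ≠ v → ¬(A u v = A v u ∧ A u v ≠ 0)) (u v : Fin n) :
    A1s A u v * H0 A u v = 0 := by
  rcases eq_or_ne u v with rfl | huv
  · simp [A1s, hdiag]
  · exact A1s_mul_H0_of_ne A hnosym huv

end QL

theorem stmt_18 {n : ℕ} (A : Matrix (Fin n) (Fin n) ℝ)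
    (hdiag : ∀ u, A u u = 0)
    (hnosym : ∀ u v, u ≠ v → ¬(A u v = A v u ∧ A u v ≠ 0)) :
    let H21 : Matrix (Fin n) (Fin n) ℝ :=
      fun u v => QL.Nm A u v * (QL.Um (QL.Tm A) u v - QL.Lm (QL.Tm A)ᵀ u v)
    let Hm : Matrix (Fin n) (Fin n) ℍ[ℝ] :=
      fun u v => ⟨0, 0, QL.A2s A u v * H21 u v, QL.A3s A u v * (-(H21 u v))⟩
    let Hσ : Matrix (Fin n) (Fin n) ℍ[ℝ] :=
      fun u v => ⟨QL.A1s A u v * (1 - QL.Nm A u v), QL.A1s A u v * QL.Rm A u v, 0, 0⟩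
    (∀ u v, u ≠ v → QL.A1s A u v * QL.H0 A u v = 0) ∧
    (∀ u v, QL.Hq A u v =
      ((1 - QL.Om A u v : ℝ) : ℍ[ℝ]) * Hσ u v + ((QL.Om A u v : ℝ) : ℍ[ℝ]) * Hm u v) := by
  intro H21 Hm Hσ
  refine ⟨fun u v => QL.A1s_mul_H0_of_ne A hnosym, fun u v => ?_⟩
  -- `H¹`, `H²`, `H³` already carry the factors `1 - O` and `O`, so only the real part needs
  -- `A¹ₛ ⊙ H⁰ = 0`, on the diagonal included.
  have hre : QL.A1s A u v * (1 - QL.Nm A u v) = 0 := QL.A1s_mul_H0 A hdiag hnosym u v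
  ext <;> simp only [Quaternion.re_add, Quaternion.imI_add, Quaternion.imJ_add, Quaternion.imK_add,
    Quaternion.re_mul, Quaternion.imI_mul, Quaternion.imJ_mul, Quaternion.imK_mul, Quaternion.re_coe,
    Quaternion.imI_coe, Quaternion.imJ_coe, Quaternion.imK_coe] <;>
    simp only [QL.Hq, QL.H0, QL.H1, QL.H2, QL.H3, Hσ, Hm, H21]
  · linear_combination QL.Om A u v * hre
  all_goals ring
end
end
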